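/- Let P₂(t) = (1-3t)²·Q(t) where Q(t) = 1 - t + 9t² - 45t³ + 108t⁴ - 324t⁵ + 972t⁶ - 3645t⁷ + 6561t⁸ - 6561t⁹ + 59049t¹⁰. Then the number of inverse roots α of P₂ (with multiplicity) such that α/3 is a root of unity is exactly 2. -/

import Mathlib

open Polynomial
open scoped Classical

/-!
The factor `(1 - 3t)²` contributes the double inverse root `α = 3`. For the other inverse
roots, put `z = 3r` for a root `r` of `Q`: then `3 Q(z/3)` is a palindromic polynomial of
degree 10, equal to `z⁵ T(z + z⁻¹)` with `T = 3y⁵ - y⁴ - 12y³ - y² + 10y + 4`. If `z` were a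
root of unity, `z + z⁻¹` would be an algebraic integer. But `T` is irreducible over `ℤ`, since
it stays irreducible of degree 5 modulo 5, and its leading coefficient `3` is not a unit, so
the minimal polynomial of an algebraic integer (which is monic) cannot divide it.
-/

namespace Polynomial

theorem IsPrimitive.irreducible_of_irreducible_map_of_natDegree_eq {R S : Type*} [CommRing R]
    [IsDomain R] [CommRing S] [IsDomain S] {f : R[X]} (φ : R →+* S) (hf : f.IsPrimitive)
    (hdeg : (f.map φ).natDegree = f.natDegree) (hirr : Irreducible (f.map φ)) :
    Irreducible f := by
  have isUnit_of_isUnit_map : ∀ a b : R[X], f = a * b → IsUnit (a.map φ) → IsUnit a := by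
    rintro a b rfl ha
    obtain ⟨ha0, hb0⟩ := mul_ne_zero_iff.mp hf.ne_zero
    rw [Polynomial.map_mul] at hdeg hirr
    obtain ⟨ha0', hb0'⟩ := mul_ne_zero_iff.mp hirr.ne_zero
    have hadeg : a.natDegree = 0 := by
      rw [natDegree_mul ha0 hb0, natDegree_mul ha0' hb0', natDegree_eq_zero_of_isUnit ha] at hdeg
      have := natDegree_map_le (f := φ) (p := a)
      have := natDegree_map_le (f := φ) (p := b)
      omega
    rw [eq_C_of_natDegree_eq_zero hadeg] at hf ⊢
    exact isUnit_C.mpr (hf _ (dvd_mul_right _ _))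
  refine ⟨fun hu => hirr.not_isUnit (hu.map (mapRingHom φ)), fun a b hab => ?_⟩
  rcases hirr.isUnit_or_isUnit (by rw [hab, Polynomial.map_mul]) with ha | hb
  · exact .inl (isUnit_of_isUnit_map a b hab ha)
  · exact .inr (isUnit_of_isUnit_map b a (hab.trans (mul_comm a b)) hb)

theorem aeval_ne_zero_of_irreducible_of_not_isUnit_leadingCoeff {R S : Type*} [CommRing R]
    [IsDomain R] [IsIntegrallyClosed R] [CommRing S] [IsDomain S] [Algebra R S]
    [Module.IsTorsionFree R S] {f : R[X]} (hf : Irreducible f) (hlc : ¬IsUnit f.leadingCoeff)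
    {x : S} (hx : IsIntegral R x) : aeval x f ≠ 0 := by
  intro h
  obtain ⟨g, rfl⟩ := minpoly.isIntegrallyClosed_dvd hx h
  have hg : IsUnit g := (hf.isUnit_or_isUnit rfl).resolve_left (minpoly.not_isUnit R x)
  rw [leadingCoeff_mul, (minpoly.monic hx).leadingCoeff, one_mul] at hlc
  exact hlc (hg.map leadingCoeffHom)

theorem Monic.eq_X_sq_add {R : Type*} [CommSemiring R] {p : R[X]} (hp : p.Monic)
    (h2 : p.natDegree = 2) :
    p = X ^ 2 + C (p.coeff 1) * X + C (p.coeff 0) := by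
  conv_lhs => rw [hp.as_sum, h2]
  simp only [Finset.sum_range_succ, Finset.sum_range_zero, pow_zero, pow_one, mul_one, zero_add]
  ring

end Polynomial

theorem isIntegral_add_inv_of_pow_eq_one {K : Type*} [Field K] {z : K} {n : ℕ} (hn : 0 < n)
    (hz : z ^ n = 1) : IsIntegral ℤ (z + z⁻¹) := by
  have isIntegral_of_pow : ∀ w : K, w ^ n = 1 → IsIntegral ℤ w := fun w hw =>
    IsIntegral.of_pow hn (hw ▸ isIntegral_one)
  exact (isIntegral_of_pow z hz).add (isIntegral_of_pow z⁻¹ (by rw [inv_pow, hz, inv_one]))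

noncomputable def traceQuintic (R : Type*) [CommRing R] : R[X] :=
  3 * X ^ 5 - X ^ 4 - 12 * X ^ 3 - X ^ 2 + 10 * X + 4

section traceQuintic

variable {R : Type*} [CommRing R]

theorem traceQuintic_map {S : Type*} [CommRing S] (φ : R →+* S) :
    (traceQuintic R).map φ = traceQuintic S := by
  simp [traceQuintic]

theorem natDegree_traceQuintic (h3 : (3 : R) ≠ 0) : (traceQuintic R).natDegree = 5 := by
  unfold traceQuintic
  compute_degree!

theorem leadingCoeff_traceQuintic (h3 : (3 : R) ≠ 0) : (traceQuintic R).leadingCoeff = 3 := by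
  rw [leadingCoeff, natDegree_traceQuintic h3]
  simp [traceQuintic, coeff_X]

theorem eval_traceQuintic_add_inv {K : Type*} [Field K] {z : K} (hz : z ≠ 0) :
    z ^ 5 * eval (z + z⁻¹) (traceQuintic K) = 3 - z + 3 * z ^ 2 - 5 * z ^ 3 + 4 * z ^ 4
      - 4 * z ^ 5 + 4 * z ^ 6 - 5 * z ^ 7 + 3 * z ^ 8 - z ^ 9 + 3 * z ^ 10 := by
  simp only [traceQuintic, eval_add, eval_sub, eval_mul, eval_pow, eval_X, eval_ofNat]
  field_simp
  ring

theorem traceQuintic_eq_mul_add (a b : R) :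
    traceQuintic R = (X ^ 2 + C a * X + C b) * (3 * X ^ 3 + C (-1 - 3 * a) * X ^ 2
        + C (-12 + a + 3 * a ^ 2 - 3 * b) * X + C (-1 + 12 * a - a ^ 2 - 3 * a ^ 3 + 6 * a * b + b))
      + (C (10 + a - 12 * a ^ 2 + a ^ 3 + 3 * a ^ 4 - 9 * a ^ 2 * b - 2 * a * b + 12 * b
          + 3 * b ^ 2) * X
        + C (4 + b - 12 * a * b + a ^ 2 * b + 3 * a ^ 3 * b - 6 * a * b ^ 2 - b ^ 2)) := by
  simp only [traceQuintic, C_add, C_sub, C_mul, C_neg, C_pow, C_ofNat, C_1]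
  ring

theorem traceQuintic_isPrimitive : (traceQuintic ℤ).IsPrimitive := by
  intro r hr
  have h4 : r ∣ 1 := by simpa [traceQuintic, coeff_X] using (C_dvd_iff_dvd_coeff r _).mp hr 4
  exact isUnit_of_dvd_one h4

end traceQuintic

instance Nat.fact_prime_five : Fact (Nat.Prime 5) := ⟨by norm_num⟩

theorem eval_traceQuintic_zmod_five_ne_zero (x : ZMod 5) :
    eval x (traceQuintic (ZMod 5)) ≠ 0 := by
  simp only [traceQuintic, eval_add, eval_sub, eval_mul, eval_pow, eval_X, eval_ofNat]
  revert x
  decide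

theorem not_X_sq_add_dvd_traceQuintic_zmod_five (a b : ZMod 5) :
    ¬X ^ 2 + C a * X + C b ∣ traceQuintic (ZMod 5) := by
  intro h
  rw [traceQuintic_eq_mul_add a b, dvd_add_right (dvd_mul_right _ _)] at h
  have hdeg : (X ^ 2 + C a * X + C b).natDegree = 2 := by compute_degree!
  have hrem := eq_zero_of_dvd_of_natDegree_lt h (natDegree_linear_le.trans_lt (by omega))
  have h1 := congrArg (coeff · 1) hrem
  have h0 := congrArg (coeff · 0) hrem
  simp only [coeff_add, coeff_C_mul_X, coeff_C, coeff_zero, ↓reduceIte, one_ne_zero, zero_ne_one,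
    add_zero, zero_add] at h1 h0
  clear h hdeg hrem
  revert a b
  decide

theorem irreducible_traceQuintic_zmod_five : Irreducible (traceQuintic (ZMod 5)) := by
  have hdeg : (traceQuintic (ZMod 5)).natDegree = 5 := natDegree_traceQuintic (by decide)
  have hne : traceQuintic (ZMod 5) ≠ 0 := ne_zero_of_natDegree_gt (n := 0) (by omega)
  have hnu : ¬IsUnit (traceQuintic (ZMod 5)) := fun hu => by
    have := natDegree_eq_zero_of_isUnit hu
    omega
  rw [irreducible_iff_lt_natDegree_lt hne hnu, hdeg]
  intro q hq hqdeg
  obtain hq1 | hq2 : q.natDegree = 1 ∨ q.natDegree = 2 := by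
    simp only [Finset.mem_Ioc] at hqdeg
    omega
  · rw [hq.eq_X_add_C hq1, ← sub_neg_eq_add, ← C_neg, dvd_iff_isRoot]
    exact eval_traceQuintic_zmod_five_ne_zero _
  · rw [hq.eq_X_sq_add hq2]
    exact not_X_sq_add_dvd_traceQuintic_zmod_five _ _

theorem irreducible_traceQuintic : Irreducible (traceQuintic ℤ) := by
  apply traceQuintic_isPrimitive.irreducible_of_irreducible_map_of_natDegree_eq
    (Int.castRingHom (ZMod 5))
  · rw [traceQuintic_map, natDegree_traceQuintic (by decide), natDegree_traceQuintic (by decide)]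
  · rw [traceQuintic_map]
    exact irreducible_traceQuintic_zmod_five

theorem aeval_traceQuintic_ne_zero {S : Type*} [CommRing S] [IsDomain S] [CharZero S] {y : S}
    (hy : IsIntegral ℤ y) : aeval y (traceQuintic ℤ) ≠ 0 :=
  aeval_ne_zero_of_irreducible_of_not_isUnit_leadingCoeff irreducible_traceQuintic
    (by rw [leadingCoeff_traceQuintic (by decide), Int.isUnit_iff]; decide) hy

theorem one_div_three_mul_pow_ne_one {r : ℂ}
    (hr : 1 - r + 9 * r ^ 2 - 45 * r ^ 3 + 108 * r ^ 4 - 324 * r ^ 5 + 972 * r ^ 6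
      - 3645 * r ^ 7 + 6561 * r ^ 8 - 6561 * r ^ 9 + 59049 * r ^ 10 = 0)
    {n : ℕ} (hn : 0 < n) : (1 / (3 * r)) ^ n ≠ 1 := by
  intro h
  have hzn : (3 * r) ^ n = 1 := by rwa [one_div, inv_pow, inv_eq_one] at h
  have hz : 3 * r ≠ 0 := fun hz => by simp [hz, hn.ne'] at hzn
  apply aeval_traceQuintic_ne_zero (isIntegral_add_inv_of_pow_eq_one hn hzn)
  rw [aeval_def, eval₂_eq_eval_map, traceQuintic_map]
  have hprod := (eval_traceQuintic_add_inv hz).trans (by linear_combination 3 * hr : _ = (0 : ℂ))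
  exact (mul_eq_zero.mp hprod).resolve_left (pow_ne_zero 5 hz)

/-- Let `P₂(t) = (1-3t)²·Q(t)` with
`Q(t) = 1 - t + 9t² - 45t³ + 108t⁴ - 324t⁵ + 972t⁶ - 3645t⁷ + 6561t⁸ - 6561t⁹ + 59049t¹⁰`.
The number of inverse roots `α` of `P₂` (counted with multiplicity, i.e. roots `r = 1/α`)
such that `α/3` is a root of unity is exactly `2`. -/
theorem stmt18 (Q P₂ : Polynomial ℂ)
    (hQ : Q = 1 - X + 9 * X ^ 2 - 45 * X ^ 3 + 108 * X ^ 4 - 324 * X ^ 5 + 972 * X ^ 6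
      - 3645 * X ^ 7 + 6561 * X ^ 8 - 6561 * X ^ 9 + 59049 * X ^ 10)
    (hP₂ : P₂ = (1 - 3 * X) ^ 2 * Q) :
    Multiset.card
      (P₂.roots.filter (fun r => ∃ n : ℕ, 0 < n ∧ (1 / (3 * r)) ^ n = 1)) = 2 := by
  have hQ0 : Q ≠ 0 := by
    rintro rfl
    simpa using congrArg (eval 0) hQ
  have hlinear : (1 - 3 * X : ℂ[X]) = C (-3) * (X - C 3⁻¹) := by
    rw [mul_sub, ← C_mul, neg_mul, mul_inv_cancel₀ three_ne_zero, C_neg, C_neg, C_1, map_ofNat]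
    ring
  have hlinear_ne : (1 - 3 * X : ℂ[X]) ≠ 0 := by
    rw [hlinear]
    exact mul_ne_zero (by simp) (X_sub_C_ne_zero _)
  have hroots : P₂.roots = 2 • {3⁻¹} + Q.roots := by
    rw [hP₂, roots_mul (mul_ne_zero (pow_ne_zero 2 hlinear_ne) hQ0), roots_pow, hlinear,
      roots_C_mul _ (by norm_num), roots_X_sub_C]
  rw [hroots, Multiset.filter_add, Multiset.card_add, Multiset.filter_eq_self.mpr,
    Multiset.filter_eq_nil.mpr]
  · simp
  · rintro r hr ⟨n, hn, h⟩
    refine one_div_three_mul_pow_ne_one ?_ hn h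
    simpa [hQ] using (mem_roots hQ0).mp hr
  · intro a ha
    rw [Multiset.mem_nsmul, Multiset.mem_singleton] at ha
    exact ⟨1, one_pos, by norm_num [ha.2]⟩
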